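/- arXiv:1103.0821 — 3 statements merged into one kernel-verified Lean document; each statement's English description precedes it below -/
import Mathlib

section
/- Let p ≥ 5 be a prime and k an even integer. Suppose f_1, ..., f_r ∈ M_k(SL_2(Z)) have p-integral rational Fourier coefficients, and set g(τ, τ') = Σ_α f_α(τ) f_α(τ'). Write g = Σ_{i} f_{(i)}(τ) · Δ(τ')^i E_4(τ')^j E_6(τ')^t where for each admissible i the exponents j ≥ 0, t ∈ {0,1} satisfy 12i + 4j + 6t = k. If the coefficient of q^n q'^m in g is ≡ 0 (mod p) for all 0 ≤ n, m ≤ k/10, then f_{(i)} ≡ 0 (mod p) for all i, and hence g ≡ 0 (mod p). -/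
/-- `a` is a `p`-integral rational: `v_p(a) ≥ 0`. -/
def pIntegral (p : ℕ) (a : ℚ) : Prop := a = 0 ∨ 0 ≤ padicValRat p a

/-- `a ≡ 0 (mod p)` as a `p`-integral rational: `v_p(a) ≥ 1`. -/
def modpZero (p : ℕ) (a : ℚ) : Prop := a = 0 ∨ 1 ≤ padicValRat p a

lemma modpZero_zero (p : ℕ) : modpZero p 0 := Or.inl rfl

lemma modpZero_neg {p : ℕ} {a : ℚ} (h : modpZero p a) : modpZero p (-a) := by
  rcases h with h | h
  · exact Or.inl (by simp [h])
  · exact Or.inr (by rwa [padicValRat.neg])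

lemma modpZero_add {p : ℕ} (hp : p.Prime) {a b : ℚ} (ha : modpZero p a)
    (hb : modpZero p b) : modpZero p (a + b) := by
  haveI : Fact p.Prime := ⟨hp⟩
  rcases eq_or_ne a 0 with h | ha0
  · simpa [h] using hb
  rcases eq_or_ne b 0 with h | hb0
  · simpa [h] using ha
  rcases eq_or_ne (a + b) 0 with h | hab0
  · exact Or.inl h
  refine Or.inr ?_
  have := padicValRat.min_le_padicValRat_add (p := p) hab0
  have h1 : 1 ≤ padicValRat p a := ha.resolve_left ha0
  have h2 : 1 ≤ padicValRat p b := hb.resolve_left hb0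
  exact le_trans (le_min h1 h2) this

lemma modpZero_mul {p : ℕ} (hp : p.Prime) {a b : ℚ} (ha : modpZero p a)
    (hb : pIntegral p b) : modpZero p (a * b) := by
  haveI : Fact p.Prime := ⟨hp⟩
  rcases eq_or_ne a 0 with h | ha0
  · exact Or.inl (by simp [h])
  rcases eq_or_ne b 0 with h | hb0
  · exact Or.inl (by simp [h])
  refine Or.inr ?_
  rw [padicValRat.mul ha0 hb0]
  have h1 : 1 ≤ padicValRat p a := ha.resolve_left ha0
  have h2 : 0 ≤ padicValRat p b := hb.resolve_left hb0
  omega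

lemma pIntegral_int {p : ℕ} (hp : p.Prime) (n : ℤ) : pIntegral p (n : ℚ) := by
  haveI : Fact p.Prime := ⟨hp⟩
  rcases eq_or_ne n 0 with h | hn
  · exact Or.inl (by simp [h])
  · exact Or.inr (by rw [padicValRat.of_int]; exact Int.natCast_nonneg _)

lemma modpZero_sum {p : ℕ} (hp : p.Prime) {ι : Type*} (s : Finset ι) (f : ι → ℚ)
    (h : ∀ x ∈ s, modpZero p (f x)) : modpZero p (∑ x ∈ s, f x) :=
  Finset.sum_induction f (modpZero p) (fun _ _ => modpZero_add hp) (modpZero_zero p) h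

/-- Let `g(τ,τ') = Σ_α f_α(τ) f_α(τ')` with each `f_α ∈ M_k(SL₂(ℤ))`
`p`-integral (given by its q-expansion `c α`).  Writing
`g = Σ_{i ∈ I} f_{(i)}(τ) Δ(τ')^i E₄(τ')^j E₆(τ')^t` where `I` is the set of
admissible `i` (with `12i+4j+6t = k`, `t ≤ 1`), `b i` is the q-expansion of
`Δ^i E₄^j E₆^t` (starting `q^i + ⋯`) and `d i` the q-expansion of the weight-`k`
form `f_{(i)}` (which satisfies Sturm's bound `k/12`, hypothesis `hSturm`):
if all coefficients of `q^n q'^m` of `g` vanish mod `p` for `n, m ≤ k/10`, then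
every `f_{(i)} ≡ 0 (mod p)`, hence `g ≡ 0 (mod p)`. -/
theorem stmt3 (p : ℕ) (hp : p.Prime) (hp5 : 5 ≤ p) (k : ℕ) (hk : Even k)
    (r : ℕ) (c : Fin r → ℕ → ℚ) (hcint : ∀ α n, pIntegral p (c α n))
    (I : Finset ℕ) (hI : ∀ i : ℕ, i ∈ I ↔ ∃ j t : ℕ, t ≤ 1 ∧ 12 * i + 4 * j + 6 * t = k)
    (b : ℕ → ℕ → ℤ)
    (hb0 : ∀ i ∈ I, ∀ n < i, b i n = 0) (hb1 : ∀ i ∈ I, b i i = 1)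
    (d : ℕ → ℕ → ℚ) (hdint : ∀ i ∈ I, ∀ n, pIntegral p (d i n))
    (hdecomp : ∀ n m : ℕ, ∑ α, c α n * c α m = ∑ i ∈ I, d i n * (b i m : ℚ))
    (hSturm : ∀ i ∈ I, (∀ n ≤ k / 12, modpZero p (d i n)) → ∀ n, modpZero p (d i n))
    (hvan : ∀ n m : ℕ, n ≤ k / 10 → m ≤ k / 10 → modpZero p (∑ α, c α n * c α m)) :
    (∀ i ∈ I, ∀ n, modpZero p (d i n)) ∧
    (∀ n m : ℕ, modpZero p (∑ α, c α n * c α m)) := by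
  -- Key claim: for n ≤ k/10 and i ∈ I, d i n ≡ 0 mod p, by strong induction on i.
  have claimA : ∀ i, i ∈ I → ∀ n ≤ k / 10, modpZero p (d i n) := by
    intro i
    induction i using Nat.strong_induction_on with
    | _ i IH =>
      intro hiI n hn
      obtain ⟨j, t, ht, hjt⟩ := (hI i).mp hiI
      have hik : i ≤ k / 10 := Nat.le_div_iff_mul_le (by norm_num) |>.mpr (by omega)
      have hvani := hvan n i hn hik
      rw [hdecomp] at hvani
      have hrest : modpZero p (∑ i' ∈ I.erase i, d i' n * (b i' i : ℚ)) := by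
        refine modpZero_sum hp _ _ ?_
        intro i' hi'
        have hiI' : i' ∈ I := Finset.mem_of_mem_erase hi'
        have hne : i' ≠ i := Finset.ne_of_mem_erase hi'
        rcases lt_or_gt_of_ne hne with hlt | hgt
        · exact modpZero_mul hp (IH i' hlt hiI' n hn) (pIntegral_int hp _)
        · rw [hb0 i' hiI' i hgt]
          exact Or.inl (by simp)
      have heq : d i n = (∑ i' ∈ I, d i' n * (b i' i : ℚ))
          - (∑ i' ∈ I.erase i, d i' n * (b i' i : ℚ)) := by
        rw [← Finset.add_sum_erase _ _ hiI, hb1 i hiI]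
        push_cast
        ring
      rw [heq, sub_eq_add_neg]
      exact modpZero_add hp hvani (modpZero_neg hrest)
  have hdiv : k / 12 ≤ k / 10 := Nat.div_le_div_left (by norm_num) (by norm_num)
  have conc1 : ∀ i ∈ I, ∀ n, modpZero p (d i n) := by
    intro i hiI
    exact hSturm i hiI (fun n hn => claimA i hiI n (hn.trans hdiv))
  refine ⟨conc1, ?_⟩
  intro n m
  rw [hdecomp]
  exact modpZero_sum hp _ _ fun i hiI =>
    modpZero_mul hp (conc1 i hiI n) (pIntegral_int hp _)
end

section
/- Let k ≥ 10 be an even integer and t(k) = ⌊k/10⌋. If G = Σ A(n,r,m) q^n ξ^r q'^m is a formal series whose expansion is a product P(ξ) · q^{t(k)} q'^{t(k)} + (higher order terms in q, q'), where P(ξ) is a nonzero Laurent polynomial mod p, then A(n,r,m) ≡ 0 (mod p) for all n ≤ k/10 − 1 and m ≤ k/10 − 1, but G ≢ 0 (mod p). In particular, the bound ⌊k/10⌋ in a vanishing criterion requiring coefficients with n, m ≤ k/10 cannot be replaced by k/10 − 1. -/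
/-- Sharpness of the genus-2 Sturm bound: let `k ≥ 10` be even, `t(k) = ⌊k/10⌋`,
and let `G = Σ A(n,r,m) qⁿ ξʳ q'ᵐ` have expansion `P(ξ)·q^{t(k)} q'^{t(k)} + ⋯`
(higher order in `q, q'`) with `P` a Laurent polynomial nonzero mod `p`.  Then
`A(n,r,m) ≡ 0 (mod p)` for all `n ≤ k/10 - 1` and `m ≤ k/10 - 1`, yet
`G ≢ 0 (mod p)`. -/
theorem stmt6 (p k : ℕ) (hp : p.Prime) (hp5 : 5 ≤ p) (hk : Even k) (hk10 : 10 ≤ k)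
    (A : ℕ → ℤ → ℕ → ℚ) (P : ℤ → ℚ)
    (hlead : ∀ r : ℤ, A (k / 10) r (k / 10) = P r)
    (hPfin : (Function.support P).Finite)
    (hPne : ¬ ∀ r : ℤ, modpZero p (P r))
    (hhigher : ∀ (n : ℕ) (r : ℤ) (m : ℕ), A n r m ≠ 0 →
      (n = k / 10 ∧ m = k / 10) ∨
      (k / 10 ≤ n ∧ k / 10 ≤ m ∧ (k / 10 < n ∨ k / 10 < m))) :
    (∀ (n : ℕ) (r : ℤ) (m : ℕ), (n : ℚ) ≤ (k : ℚ) / 10 - 1 → (m : ℚ) ≤ (k : ℚ) / 10 - 1 →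
      modpZero p (A n r m)) ∧
    ¬ ∀ (n : ℕ) (r : ℤ) (m : ℕ), modpZero p (A n r m) := by
  constructor
  · intro n r m hn hm
    have hnlt : n < k / 10 := by
      have h1 : (n : ℚ) + 1 ≤ (k : ℚ) / 10 := by linarith
      have h2 : (10 : ℚ) * ((n : ℚ) + 1) ≤ (k : ℚ) := by linarith
      have h3 : 10 * (n + 1) ≤ k := by exact_mod_cast h2
      have := Nat.le_div_iff_mul_le (by norm_num : 0 < 10) |>.2
        (by linarith : (n + 1) * 10 ≤ k)
      omega
    left
    by_contra hA
    rcases hhigher n r m hA with ⟨h1, _⟩ | ⟨h1, _, _⟩ <;> omega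
  · intro hall
    apply hPne
    intro r
    have := hall (k / 10) r (k / 10)
    rwa [hlead] at this
end

section
/- Let p ≥ 5 be prime and let F = Σ_{m≥0} φ_m (q')^m and G = Σ_{m≥0} ψ_m (q')^m be formal q'-series with φ_m, ψ_m ∈ Z_(p)[ξ, ξ^{-1}][[q]] (power series in q, Laurent polynomials in ξ). Suppose ψ_0 ≡ 0 mod p, ψ_1 ≢ 0 mod p, and F ≡ H·G mod p for some series H = Σ φ_m^{(1)} (q')^m with coefficients in Z_(p)[ξ,ξ^{-1}][[q]]. If φ_m ≡ 0 mod p for all 0 ≤ m ≤ M, then φ_m^{(1)} ≡ 0 mod p for all 0 ≤ m ≤ M − 1. -/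
/-!
Reduce modulo `p`: since `p` stays prime in `ℤ_(p)[ξ,ξ⁻¹][[q]]`, the reduction is an integral
domain. There `ψ₀ ≡ 0`, so the coefficient of `(q')^(m+1)` in `F ≡ H·G` reads
`φ_(m+1) ≡ Σ_(j<m) φ⁽¹⁾_j ψ_(m+1-j) + φ⁽¹⁾_m ψ₁`; by strong induction on `m` the sum vanishes, and
`φ_(m+1) ≡ 0` together with `ψ₁ ≢ 0` forces `φ⁽¹⁾_m ≡ 0`.
-/

open Finset

namespace PowerSeries

variable {A : Type*} [CommRing A]

theorem C_dvd_iff {c : A} {f : A⟦X⟧} : C c ∣ f ↔ ∀ n, c ∣ coeff n f := by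
  refine ⟨fun ⟨g, hg⟩ n => ⟨coeff n g, by rw [hg, coeff_C_mul]⟩,
    fun h => ⟨mk fun n => (h n).choose, ?_⟩⟩
  ext n
  rw [coeff_C_mul, coeff_mk, ← (h n).choose_spec]

theorem ker_map_mk_span_singleton (c : A) :
    RingHom.ker (map (Ideal.Quotient.mk (Ideal.span {c}))) = Ideal.span {C c} := by
  ext f
  simp only [RingHom.mem_ker, Ideal.mem_span_singleton, C_dvd_iff, PowerSeries.ext_iff,
    coeff_map, map_zero, Ideal.Quotient.eq_zero_iff_dvd]

theorem prime_C {c : A} (hc : Prime c) : Prime (C c) := by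
  have : (Ideal.span {c}).IsPrime := (Ideal.span_singleton_prime hc.ne_zero).mpr hc
  rw [← Ideal.span_singleton_prime ((map_ne_zero_iff _ C_injective).mpr hc.ne_zero),
    ← ker_map_mk_span_singleton]
  exact RingHom.ker_isPrime _

end PowerSeries

theorem IsLocalization.prime_algebraMap {R S : Type*} [CommRing R] [CommRing S] [Algebra R S]
    {M : Submonoid R} [IsLocalization M S] (hM : M ≤ nonZeroDivisors R) {a : R} (ha : Prime a)
    (haM : ∀ m ∈ M, ¬ a ∣ m) : Prime (algebraMap R S a) := by
  have hdisj : Disjoint (M : Set R) (Ideal.span {a}) :=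
    Set.disjoint_left.mpr fun m hm hma => haM m hm (Ideal.mem_span_singleton.mp hma)
  have := IsLocalization.isPrime_of_isPrime_disjoint M S _
    ((Ideal.span_singleton_prime ha.ne_zero).mpr ha) hdisj
  rwa [Ideal.map_span, Set.image_singleton, Ideal.span_singleton_prime
    ((map_ne_zero_iff _ (IsLocalization.injective S hM)).mpr ha.ne_zero)] at this

theorem LaurentPolynomial.prime_C {R : Type*} [CommRing R] {c : R} (hc : Prime c) :
    Prime (C c : LaurentPolynomial R) := by
  have hC_not_dvd_X_pow : ∀ n : ℕ, ¬ Polynomial.C c ∣ Polynomial.X ^ n := by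
    rintro n ⟨g, hg⟩
    apply hc.not_isUnit
    have := congrArg (Polynomial.coeff · n) hg
    simp only [Polynomial.coeff_X_pow_self, Polynomial.coeff_C_mul] at this
    exact IsUnit.of_mul_eq_one _ this.symm
  have := IsLocalization.prime_algebraMap (S := LaurentPolynomial R)
    (M := Submonoid.powers (Polynomial.X : Polynomial R))
    (Submonoid.powers_le.mpr Polynomial.X_mem_nonzeroDivisors) (Polynomial.prime_C_iff.mpr hc)
    (by rintro _ ⟨n, rfl⟩; exact hC_not_dvd_X_pow n)
  rwa [LaurentPolynomial.algebraMap_eq_toLaurent, Polynomial.toLaurent_C] at this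

theorem IsLocalization.AtPrime.prime_algebraMap_of_eq_span {R S : Type*} [CommRing R]
    [IsDomain R] [CommRing S] [Algebra R S] {a : R} (ha : Prime a) {P : Ideal R} [P.IsPrime]
    [IsLocalization.AtPrime S P] (hP : P = Ideal.span {a}) : Prime (algebraMap R S a) :=
  IsLocalization.prime_algebraMap P.primeCompl_le_nonZeroDivisors ha
    fun _ hm ham => hm (hP ▸ Ideal.mem_span_singleton.mpr ham)

theorem dvd_of_dvd_convolution_shift {S : Type*} [CommRing S] {π : S} (hπ : Prime π)
    {f g h : ℕ → S} {M : ℕ} (hg0 : π ∣ g 0) (hg1 : ¬ π ∣ g 1)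
    (hfgh : ∀ m, π ∣ f m - ∑ j ∈ range (m + 1), h j * g (m - j)) (hf : ∀ m ≤ M, π ∣ f m) :
    ∀ m, m + 1 ≤ M → π ∣ h m := by
  intro m
  induction m using Nat.strong_induction_on with
  | _ m ih =>
    intro hm
    have hconv : π ∣ ∑ j ∈ range (m + 2), h j * g (m + 1 - j) := by
      simpa using dvd_sub (hf (m + 1) hm) (hfgh (m + 1))
    have hlow : π ∣ ∑ j ∈ range m, h j * g (m + 1 - j) :=
      dvd_sum fun j hj => (ih j (mem_range.mp hj) (by grind)).mul_right _
    rw [sum_range_succ, sum_range_succ, Nat.sub_self, Nat.add_sub_cancel_left,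
      dvd_add_left (hg0.mul_left _), dvd_add_right hlow] at hconv
    exact (hπ.dvd_or_dvd hconv).resolve_right hg1

theorem stmt10_general (p : ℕ) (hp : p.Prime)
    (P : Ideal ℤ) [P.IsPrime] (hP : P = Ideal.span {(p : ℤ)})
    (φ ψ φ₁ : ℕ → PowerSeries (LaurentPolynomial (Localization.AtPrime P)))
    (M : ℕ)
    (hψ0 : (↑p : PowerSeries (LaurentPolynomial (Localization.AtPrime P))) ∣ ψ 0)
    (hψ1 : ¬ (↑p : PowerSeries (LaurentPolynomial (Localization.AtPrime P))) ∣ ψ 1)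
    (hFG : ∀ m : ℕ, (↑p : PowerSeries (LaurentPolynomial (Localization.AtPrime P))) ∣
      (φ m - ∑ j ∈ Finset.range (m + 1), φ₁ j * ψ (m - j)))
    (hφ : ∀ m ≤ M, (↑p : PowerSeries (LaurentPolynomial (Localization.AtPrime P))) ∣ φ m) :
    ∀ m : ℕ, m + 1 ≤ M →
      (↑p : PowerSeries (LaurentPolynomial (Localization.AtPrime P))) ∣ φ₁ m := by
  have hprime : Prime (p : PowerSeries (LaurentPolynomial (Localization.AtPrime P))) := by
    simpa only [map_natCast] using PowerSeries.prime_C <| LaurentPolynomial.prime_C <|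
      IsLocalization.AtPrime.prime_algebraMap_of_eq_span (Nat.prime_iff_prime_int.mp hp) hP
  exact dvd_of_dvd_convolution_shift hprime hψ0 hψ1 hFG hφ

/-- The Fourier–Jacobi shifting step: let `p ≥ 5` be prime and let
`F = Σ φ_m (q')^m`, `G = Σ ψ_m (q')^m`, `H = Σ φ_m⁽¹⁾ (q')^m` be formal
`q'`-series with coefficients in `ℤ_(p)[ξ,ξ⁻¹][[q]]`.  If `ψ₀ ≡ 0`,
`ψ₁ ≢ 0 (mod p)`, `F ≡ H·G (mod p)` (coefficientwise, `hFG`), and `φ_m ≡ 0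
(mod p)` for all `m ≤ M`, then `φ_m⁽¹⁾ ≡ 0 (mod p)` for all `m ≤ M - 1`. -/
theorem stmt10 (p : ℕ) (hp : p.Prime) (hp5 : 5 ≤ p)
    (P : Ideal ℤ) [P.IsPrime] (hP : P = Ideal.span {(p : ℤ)})
    (φ ψ φ₁ : ℕ → PowerSeries (LaurentPolynomial (Localization.AtPrime P)))
    (M : ℕ)
    (hψ0 : (↑p : PowerSeries (LaurentPolynomial (Localization.AtPrime P))) ∣ ψ 0)
    (hψ1 : ¬ (↑p : PowerSeries (LaurentPolynomial (Localization.AtPrime P))) ∣ ψ 1)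
    (hFG : ∀ m : ℕ, (↑p : PowerSeries (LaurentPolynomial (Localization.AtPrime P))) ∣
      (φ m - ∑ j ∈ Finset.range (m + 1), φ₁ j * ψ (m - j)))
    (hφ : ∀ m ≤ M, (↑p : PowerSeries (LaurentPolynomial (Localization.AtPrime P))) ∣ φ m) :
    ∀ m : ℕ, m + 1 ≤ M →
      (↑p : PowerSeries (LaurentPolynomial (Localization.AtPrime P))) ∣ φ₁ m :=
  stmt10_general p hp P hP φ ψ φ₁ M hψ0 hψ1 hFG hφ
end
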